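/- Let (A, δ) be a commutative differential ring, (B, ∂) a differential ring with B a ℚ-algebra, and φ : A → B a ring homomorphism. Define T*_φ : A → B[[t]] by T*_φ(a) = Σ_α b_α t^α where b_α = (1/α!) Σ_{β≤α} (−1)^{α−β} (α choose β) ∂^{α−β}(φ(δ^β(a))). Then T*_φ is a differential ring homomorphism from (A, δ) to (B[[t]], ∂ + d/dt), where ∂ acts coefficientwise on B[[t]]. -/

import Mathlib

/-- The coefficientwise extension of a map `d : B → B` to `B[[t]]`. -/
noncomputable def coeffwiseDer {B : Type*} [CommRing B] (d : B → B) :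
    PowerSeries B → PowerSeries B :=
  fun f => PowerSeries.mk fun n => d (PowerSeries.coeff n f)

/-- The twisted Taylor morphism `T*_φ(a) = Σ_α b_α t^α` with
`b_α = (1/α!) Σ_{β≤α} (−1)^{α−β} (α choose β) ∂^{α−β}(φ(δ^β(a)))`. -/
noncomputable def twistedTaylor {A B : Type*} [CommRing A] [CommRing B] [Algebra ℚ B]
    (δ : A → A) (d : B → B) (φ : A →+* B) : A → PowerSeries B :=
  fun a => PowerSeries.mk fun α => (α.factorial : ℚ)⁻¹ •
    ∑ β ∈ Finset.range (α + 1),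
      ((-1 : B) ^ (α - β) * (α.choose β : B)) * d^[α - β] (φ (δ^[β] a))

/-!
Writing the coefficients as `∑_{i+j=n} (-1)^i / (i! j!) ∂^i φ(δ^j a)`, the identity
`T*(δ a) = (∂ + d/dt) T*(a)` is a direct coefficient computation. Over a `ℚ`-algebra the
coefficient of `t^(n+1)` in `f` is determined by the coefficients of `t^n` in `f` and in
`(∂ + d/dt) f`, since `d/dt` multiplies it by `n + 1`. As `∂ + d/dt` is a derivation and
`T*` is visibly additive, `T*(a b) = T*(a) T*(b)` and `T*(1) = 1` then follow by induction on
the degree, starting from `φ` in degree `0`.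
-/

open Finset PowerSeries

noncomputable def twistedDeriv {B : Type*} [CommRing B] (d : B → B) (f : B⟦X⟧) : B⟦X⟧ :=
  coeffwiseDer d f + d⁄dX B f

section TwistedDeriv

variable {B : Type*} [CommRing B]

@[simp]
lemma coeff_coeffwiseDer (d : B → B) (f : B⟦X⟧) (n : ℕ) :
    coeff n (coeffwiseDer d f) = d (coeff n f) :=
  coeff_mk _ _

lemma coeff_twistedDeriv (d : B → B) (f : B⟦X⟧) (n : ℕ) :
    coeff n (twistedDeriv d f) = d (coeff n f) + coeff (n + 1) f * (n + 1) := by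
  simp [twistedDeriv, coeff_derivative]

lemma coeffwiseDer_mul (d : Derivation ℤ B B) (f g : B⟦X⟧) :
    coeffwiseDer d (f * g) = coeffwiseDer d f * g + f * coeffwiseDer d g := by
  ext n
  simp only [coeff_coeffwiseDer, map_add, coeff_mul, map_sum, Derivation.leibniz, smul_eq_mul,
    ← sum_add_distrib]
  exact sum_congr rfl fun p _ => by ring

lemma twistedDeriv_mul (d : Derivation ℤ B B) (f g : B⟦X⟧) :
    twistedDeriv d (f * g) = twistedDeriv d f * g + f * twistedDeriv d g := by
  simp only [twistedDeriv, coeffwiseDer_mul, Derivation.leibniz, smul_eq_mul]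
  ring

lemma twistedDeriv_one (d : Derivation ℤ B B) : twistedDeriv d 1 = 0 := by
  ext n
  rcases n with _ | n <;> simp [coeff_twistedDeriv, coeff_one]

lemma coeff_succ_eq_of_twistedDeriv [Algebra ℚ B] (d : B → B) {f g : B⟦X⟧} {n : ℕ}
    (h : coeff n f = coeff n g)
    (hD : coeff n (twistedDeriv d f) = coeff n (twistedDeriv d g)) :
    coeff (n + 1) f = coeff (n + 1) g := by
  rw [coeff_twistedDeriv, coeff_twistedDeriv, h, add_right_inj] at hD
  have hunit : IsUnit ((n : B) + 1) := by
    simpa using (IsUnit.mk0 ((n : ℚ) + 1) (by positivity)).map (algebraMap ℚ B)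
  exact hunit.mul_left_injective hD

end TwistedDeriv

section TaylorWeight

open Nat

def taylorWeight (i j : ℕ) : ℚ := (-1) ^ i / (i ! * j !)

lemma succ_mul_taylorWeight_succ_left (i j : ℕ) :
    ((i + 1 : ℕ) : ℚ) * taylorWeight (i + 1) j = -taylorWeight i j := by
  simp only [taylorWeight, factorial_succ, cast_mul, pow_succ]
  field_simp

lemma succ_mul_taylorWeight_succ_right (i j : ℕ) :
    ((j + 1 : ℕ) : ℚ) * taylorWeight i (j + 1) = taylorWeight i j := by
  simp only [taylorWeight, factorial_succ, cast_mul]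
  field_simp

lemma succ_smul_sum_taylorWeight {M : Type*} [AddCommGroup M] [Module ℚ M] (x : ℕ → ℕ → M)
    (n : ℕ) :
    ((n + 1 : ℕ) : ℚ) • ∑ p ∈ antidiagonal (n + 1), taylorWeight p.1 p.2 • x p.1 p.2 =
      ∑ p ∈ antidiagonal n, taylorWeight p.1 p.2 • x p.1 (p.2 + 1) -
        ∑ p ∈ antidiagonal n, taylorWeight p.1 p.2 • x (p.1 + 1) p.2 := by
  have hsplit : ((n + 1 : ℕ) : ℚ) • ∑ p ∈ antidiagonal (n + 1), taylorWeight p.1 p.2 • x p.1 p.2 =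
      ∑ p ∈ antidiagonal (n + 1), ((p.1 : ℚ) * taylorWeight p.1 p.2) • x p.1 p.2 +
        ∑ p ∈ antidiagonal (n + 1), ((p.2 : ℚ) * taylorWeight p.1 p.2) • x p.1 p.2 := by
    rw [smul_sum, ← sum_add_distrib]
    refine sum_congr rfl fun p hp => ?_
    rw [← mem_antidiagonal.mp hp, smul_smul, ← add_smul, ← add_mul, cast_add]
  rw [hsplit, Nat.sum_antidiagonal_succ, Nat.sum_antidiagonal_succ']
  simp only [cast_zero, zero_mul, zero_smul, zero_add, succ_mul_taylorWeight_succ_left,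
    succ_mul_taylorWeight_succ_right, neg_smul, sum_neg_distrib]
  abel

end TaylorWeight

section TwistedTaylor

variable {A B : Type*} [CommRing A] [CommRing B] [Algebra ℚ B]

lemma coeff_twistedTaylor (δ : A → A) (d : B → B) (φ : A →+* B) (a : A) (n : ℕ) :
    coeff n (twistedTaylor δ d φ a) =
      ∑ p ∈ antidiagonal n, taylorWeight p.1 p.2 • d^[p.1] (φ (δ^[p.2] a)) := by
  rw [twistedTaylor, coeff_mk, smul_sum,
    Nat.sum_antidiagonal_eq_sum_range_succ (fun i j => taylorWeight i j • d^[i] (φ (δ^[j] a))),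
    ← sum_range_reflect]
  refine sum_congr rfl fun β hβ => ?_
  have hβn : β ≤ n := Nat.lt_succ_iff.mp (mem_range.mp hβ)
  rw [add_tsub_cancel_right, Nat.sub_sub_self hβn, Nat.choose_symm hβn,
    show (-1 : B) ^ β * (n.choose β : B) = algebraMap ℚ B ((-1) ^ β * n.choose β) by simp,
    ← Algebra.smul_def, smul_smul, taylorWeight, Nat.cast_choose ℚ hβn]
  congr 1
  field_simp

lemma constantCoeff_twistedTaylor (δ : A → A) (d : B → B) (φ : A →+* B) (a : A) :
    constantCoeff (twistedTaylor δ d φ a) = φ a := by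
  simp [← coeff_zero_eq_constantCoeff_apply, coeff_twistedTaylor, taylorWeight]

lemma twistedTaylor_add {F G : Type*} [FunLike F A A] [AddMonoidHomClass F A A]
    [FunLike G B B] [AddMonoidHomClass G B B] (δ : F) (d : G) (φ : A →+* B) (a b : A) :
    twistedTaylor δ d φ (a + b) = twistedTaylor δ d φ a + twistedTaylor δ d φ b := by
  ext n
  simp only [map_add, coeff_twistedTaylor, iterate_map_add, smul_add, sum_add_distrib]

lemma twistedTaylor_zero {F G : Type*} [FunLike F A A] [AddMonoidHomClass F A A]
    [FunLike G B B] [AddMonoidHomClass G B B] (δ : F) (d : G) (φ : A →+* B) :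
    twistedTaylor δ d φ 0 = 0 := by
  simpa using twistedTaylor_add δ d φ 0 0

lemma twistedTaylor_apply_eq_twistedDeriv {G : Type*} [FunLike G B B] [AddMonoidHomClass G B B]
    (δ : A → A) (d : G) (φ : A →+* B) (a : A) :
    twistedTaylor δ d φ (δ a) = twistedDeriv d (twistedTaylor δ d φ a) := by
  ext n
  have hscale : ∀ y : B, y * (n + 1) = ((n + 1 : ℕ) : ℚ) • y := fun y => by
    rw [Nat.cast_smul_eq_nsmul, nsmul_eq_mul, mul_comm, Nat.cast_succ]
  rw [coeff_twistedDeriv, coeff_twistedTaylor, coeff_twistedTaylor, coeff_twistedTaylor, hscale,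
    succ_smul_sum_taylorWeight (fun i j => d^[i] (φ (δ^[j] a))), map_sum]
  simp only [map_rat_smul, ← Function.iterate_succ_apply' d, Function.iterate_succ_apply δ]
  abel

end TwistedTaylor

section Derivations

variable {A B : Type*} [CommRing A] [CommRing B] [Algebra ℚ B]
  (δ : Derivation ℤ A A) (d : Derivation ℤ B B) (φ : A →+* B)

lemma coeff_twistedTaylor_mul (n : ℕ) (a b : A) :
    coeff n (twistedTaylor δ d φ (a * b)) =
      coeff n (twistedTaylor δ d φ a * twistedTaylor δ d φ b) := by
  induction n generalizing a b with
  | zero => simp only [coeff_zero_eq_constantCoeff_apply, map_mul, constantCoeff_twistedTaylor]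
  | succ n ih =>
    refine coeff_succ_eq_of_twistedDeriv d (ih a b) ?_
    rw [← twistedTaylor_apply_eq_twistedDeriv, twistedDeriv_mul,
      ← twistedTaylor_apply_eq_twistedDeriv, ← twistedTaylor_apply_eq_twistedDeriv,
      Derivation.leibniz, smul_eq_mul, smul_eq_mul, twistedTaylor_add, map_add, map_add,
      ← ih, ← ih, mul_comm b, add_comm]

lemma twistedTaylor_mul (a b : A) :
    twistedTaylor δ d φ (a * b) = twistedTaylor δ d φ a * twistedTaylor δ d φ b :=
  ext fun n => coeff_twistedTaylor_mul δ d φ n a b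

lemma twistedTaylor_one : twistedTaylor δ d φ 1 = 1 := by
  ext n
  induction n with
  | zero => simp [constantCoeff_twistedTaylor]
  | succ n ih =>
    refine coeff_succ_eq_of_twistedDeriv d ih ?_
    rw [← twistedTaylor_apply_eq_twistedDeriv, δ.map_one_eq_zero, twistedTaylor_zero,
      twistedDeriv_one]

end Derivations

/-- The twisted Taylor morphism is a differential ring homomorphism
`(A, δ) → (B[[t]], ∂ + d/dt)`. -/
theorem twistedTaylor_is_differential_ring_hom {A B : Type*} [CommRing A] [CommRing B]
    [Algebra ℚ B] (δ : Derivation ℤ A A) (d : Derivation ℤ B B) (φ : A →+* B) :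
    (∀ a b : A, twistedTaylor (⇑δ) (⇑d) φ (a + b) =
        twistedTaylor (⇑δ) (⇑d) φ a + twistedTaylor (⇑δ) (⇑d) φ b) ∧
    (∀ a b : A, twistedTaylor (⇑δ) (⇑d) φ (a * b) =
        twistedTaylor (⇑δ) (⇑d) φ a * twistedTaylor (⇑δ) (⇑d) φ b) ∧
    (twistedTaylor (⇑δ) (⇑d) φ 1 = 1) ∧
    (∀ a : A, twistedTaylor (⇑δ) (⇑d) φ (δ a) =
        coeffwiseDer (⇑d) (twistedTaylor (⇑δ) (⇑d) φ a) +
          PowerSeries.derivativeFun (twistedTaylor (⇑δ) (⇑d) φ a)) :=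
  ⟨twistedTaylor_add δ d φ, twistedTaylor_mul δ d φ, twistedTaylor_one δ d φ,
    twistedTaylor_apply_eq_twistedDeriv δ d φ⟩
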